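/- arXiv:2007.05808 — 6 statements merged into one kernel-verified Lean document; each statement's English description precedes it below -/
import Mathlib

section
/- Let G be a connected simple graph, S a mixed resolving set of G, and x ∈ S. Then |S| ≥ 1 + ⌈log₂(1 + deg(x))⌉. -/
/-!
Identify a vertex `u` with the diagonal `s(u, u)`, whose distance to `w` is `d(w, u)`. Then a
mixed resolving set `S` separates the `1 + deg x` elements `s(x, v)` with `v = x` or `v ~ x`. All of
them are at distance `0` from `x`, and their distance to any `w` is `d(w, x)` or `d(w, x) - 1`,
so each is determined by the set of `w ∈ S \ {x}` at which the first alternative holds. Hence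
`1 + deg x ≤ 2 ^ (|S| - 1)`.
-/

open SimpleGraph

/-- Distance from a vertex `w` to an edge `e` (as a `Sym2`). -/
noncomputable def edist {V : Type*} (G : SimpleGraph V) (w : V) (e : Sym2 V) : Nat :=
  Sym2.lift ⟨fun u v => min (G.dist w u) (G.dist w v), fun u v => min_comm _ _⟩ e

/-- `S` is a mixed resolving set: every two distinct elements of `V ∪ E`
are distinguished by the distance to some vertex of `S`. -/
def MixedResolvingSet {V : Type*} (G : SimpleGraph V) (S : Set V) : Prop :=
  (∀ u v : V, u ≠ v → ∃ w ∈ S, G.dist w u ≠ G.dist w v) ∧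
  (∀ e ∈ G.edgeSet, ∀ f ∈ G.edgeSet, e ≠ f → ∃ w ∈ S, edist G w e ≠ edist G w f) ∧
  (∀ u : V, ∀ e ∈ G.edgeSet, ∃ w ∈ S, G.dist w u ≠ edist G w e)

/-- The mixed metric dimension of `G`. -/
noncomputable def mixedDim {V : Type*} (G : SimpleGraph V) : Nat :=
  sInf {n | ∃ S : Set V, MixedResolvingSet G S ∧ S.ncard = n}

section

open Finset

variable {V : Type*} {G : SimpleGraph V}

lemma edist_mk (G : SimpleGraph V) (w u v : V) :
    edist G w s(u, v) = min (G.dist w u) (G.dist w v) := rfl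

lemma edist_diag (G : SimpleGraph V) (w u : V) : edist G w s(u, u) = G.dist w u :=
  min_self _

lemma edist_self_mk_left (G : SimpleGraph V) (x y : V) : edist G x s(x, y) = 0 := by
  simp [edist_mk]

lemma edist_mk_eq_or_add_one_eq {x y : V} (hy : G.Adj x y ∨ y = x) (w : V) :
    edist G w s(x, y) = G.dist w x ∨ edist G w s(x, y) + 1 = G.dist w x := by
  have hle : G.dist w x ≤ G.dist w y + 1 := by
    rcases hy with hadj | rfl
    · simpa [dist_eq_one_iff_adj.mpr hadj.symm] using hadj.symm.reachable.dist_triangle_right w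
    · exact Nat.le_succ _
  rw [edist_mk]
  omega

lemma edist_mk_eq_of_iff {x y z : V} (hy : G.Adj x y ∨ y = x) (hz : G.Adj x z ∨ z = x)
    {w : V} (h : edist G w s(x, y) = G.dist w x ↔ edist G w s(x, z) = G.dist w x) :
    edist G w s(x, y) = edist G w s(x, z) := by
  have := edist_mk_eq_or_add_one_eq hy w
  have := edist_mk_eq_or_add_one_eq hz w
  omega

lemma mem_range_diag_or_mem_edgeSet {x y : V} (h : G.Adj x y ∨ y = x) :
    s(x, y) ∈ Set.range Sym2.diag ∨ s(x, y) ∈ G.edgeSet := by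
  rcases h with h | rfl
  · exact Or.inr h
  · exact Or.inl ⟨_, rfl⟩

namespace MixedResolvingSet

lemma exists_edist_ne {S : Set V} (hS : MixedResolvingSet G S) {e f : Sym2 V}
    (he : e ∈ Set.range Sym2.diag ∨ e ∈ G.edgeSet)
    (hf : f ∈ Set.range Sym2.diag ∨ f ∈ G.edgeSet) (hef : e ≠ f) :
    ∃ w ∈ S, edist G w e ≠ edist G w f := by
  obtain ⟨hVV, hEE, hVE⟩ := hS
  rcases he with he | he <;> rcases hf with hf | hf
  · obtain ⟨u, rfl⟩ := he
    obtain ⟨v, rfl⟩ := hf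
    simpa only [Sym2.diag, edist_diag] using hVV u v (fun h => hef (h ▸ rfl))
  · obtain ⟨u, rfl⟩ := he
    simpa only [Sym2.diag, edist_diag] using hVE u f hf
  · obtain ⟨v, rfl⟩ := hf
    simpa only [Sym2.diag, edist_diag, ne_comm] using hVE v e he
  · exact hEE e he f hf hef

theorem degree_add_one_le_two_pow [Fintype V] [DecidableRel G.Adj] {S : Finset V}
    (hS : MixedResolvingSet G S) {x : V} (hx : x ∈ S) :
    G.degree x + 1 ≤ 2 ^ (S.card - 1) := by
  classical
  set N := insert x (G.neighborFinset x)
  have hN : ∀ v ∈ N, G.Adj x v ∨ v = x := by simp [N, or_comm]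
  let code : V → Finset V := fun v => (S.erase x).filter fun w => edist G w s(x, v) = G.dist w x
  have hcode : Set.InjOn code N := by
    intro y hy z hz hyz
    by_contra hne
    obtain ⟨w, hwS, hw⟩ := hS.exists_edist_ne (mem_range_diag_or_mem_edgeSet (hN y hy))
      (mem_range_diag_or_mem_edgeSet (hN z hz)) (Sym2.congr_right.not.mpr hne)
    have hwx : w ≠ x := by
      rintro rfl
      simp [edist_self_mk_left] at hw
    refine hw (edist_mk_eq_of_iff (hN y hy) (hN z hz) ?_)
    simpa [code, hwx, mem_coe.mp hwS] using Finset.ext_iff.mp hyz w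
  calc G.degree x + 1 = N.card := by
        rw [card_insert_of_notMem (by simp), card_neighborFinset_eq_degree]
    _ ≤ (S.erase x).powerset.card :=
        card_le_card_of_injOn code (fun _ _ => mem_powerset.mpr (filter_subset _ _)) hcode
    _ = 2 ^ (S.card - 1) := by rw [card_powerset, card_erase_of_mem hx]

end MixedResolvingSet

end

theorem stmt_0_general {V : Type*} [Fintype V] (G : SimpleGraph V) [DecidableRel G.Adj]
    (S : Finset V) (hS : MixedResolvingSet G ↑S) (x : V) (hx : x ∈ S) :
    S.card ≥ 1 + Nat.clog 2 (1 + G.degree x) := by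
  have hclog : Nat.clog 2 (1 + G.degree x) ≤ S.card - 1 :=
    (Nat.clog_le_iff_le_pow (by norm_num)).mpr (by
      simpa [add_comm] using hS.degree_add_one_le_two_pow hx)
  have hS_pos : 0 < S.card := Finset.card_pos.mpr ⟨x, hx⟩
  omega

theorem stmt_0 {V : Type*} [Fintype V] (G : SimpleGraph V) [DecidableRel G.Adj]
    (hG : G.Connected) (S : Finset V) (hS : MixedResolvingSet G ↑S) (x : V) (hx : x ∈ S) :
    S.card ≥ 1 + Nat.clog 2 (1 + G.degree x) :=
  stmt_0_general G S hS x hx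
end

section
/- Let G be a connected simple graph, e = uv an edge, and S a mixed resolving set of G. Then S intersects both V_{>,uv} = {w ∈ V : d(u,w) > d(v,w)} and V_{<,uv} = {w ∈ V : d(u,w) < d(v,w)} nontrivially. -/
open SimpleGraph

theorem stmt_4 {V : Type*} (G : SimpleGraph V) (hG : G.Connected)
    (u v : V) (huv : G.Adj u v) (S : Set V) (hS : MixedResolvingSet G S) :
    (S ∩ {w | G.dist u w > G.dist v w}).Nonempty ∧
    (S ∩ {w | G.dist u w < G.dist v w}).Nonempty := by
  obtain ⟨-, -, h3⟩ := hS
  have he : s(u, v) ∈ G.edgeSet := huv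
  constructor
  · obtain ⟨w, hwS, hw⟩ := h3 u s(u, v) he
    refine ⟨w, hwS, ?_⟩
    have h : edist G w s(u, v) = min (G.dist w u) (G.dist w v) := rfl
    rw [h] at hw
    have hlt : G.dist w v < G.dist w u := by
      rcases lt_or_ge (G.dist w v) (G.dist w u) with h' | h'
      · exact h'
      · exact absurd (min_eq_left h').symm hw
    simpa [Set.mem_setOf_eq, SimpleGraph.dist_comm (G := G) (u := u) (v := w), SimpleGraph.dist_comm (G := G) (u := v) (v := w)] using hlt
  · obtain ⟨w, hwS, hw⟩ := h3 v s(u, v) he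
    refine ⟨w, hwS, ?_⟩
    have h : edist G w s(u, v) = min (G.dist w u) (G.dist w v) := rfl
    rw [h] at hw
    have hlt : G.dist w u < G.dist w v := by
      rcases lt_or_ge (G.dist w u) (G.dist w v) with h' | h'
      · exact h'
      · exact absurd (min_eq_right h').symm hw
    simpa [Set.mem_setOf_eq, SimpleGraph.dist_comm (G := G) (u := u) (v := w), SimpleGraph.dist_comm (G := G) (u := v) (v := w)] using hlt
end

section
/- For m = 2k, n = 2l with k,l ≥ 2, the set S = {(0,0), (0,1), (1,l), (k,0)} is a mixed resolving set of the torus graph T_{m,n} = C_m □ C_n; hence β_M(T_{2k,2l}) ≤ 4. -/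
open SimpleGraph

/-- The cycle graph on `ZMod n`. -/
def cycleZ (n : Nat) : SimpleGraph (ZMod n) :=
  SimpleGraph.fromRel (fun u v => u - v = 1)

/-- The torus graph `T_{m,n} = C_m □ C_n`. -/
def torus (m n : Nat) : SimpleGraph (ZMod m × ZMod n) :=
  (cycleZ m).boxProd (cycleZ n)

/-!
Subdividing every edge of `T_{m,n}` once gives `T_{2m,2n}`: the vertices of `T_{m,n}` become the
points with both coordinates even and its edges their midpoints, the points with exactly one odd
coordinate. For a vertex `w`, twice its distance to a vertex, and twice its distance to an edge
plus one, is the distance in `T_{2m,2n}` from `2w` to the corresponding point, a sum of two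
cyclic distances (`doubledDist`).

For `m = 2k` the landmarks `(0,0)` and `(k,0)` are antipodal in the first coordinate, so together
they read off the cyclic distances of both coordinates to `0`; the landmarks `(0,1)` and `(1,l)`
then supply the distances to `2`, and on a cycle of length other than `4` the distances to `0` and
`2` determine a point. Hence two vertices, or two edges, at equal distances from all landmarks
coincide. A vertex and an edge at equal distances would have doubled distances differing by
exactly one at every landmark, which the parity of the even cycles rules out.
-/

def cycDist (n p q : ℕ) : ℕ := min (p.dist q) (n - p.dist q)

section CycDist

variable {N n p q : ℕ}

lemma cycDist_comm : cycDist n p q = cycDist n q p := by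
  simp only [cycDist, Nat.dist]; omega

lemma add_one_mod_eq_or (hp : p < n) : (p + 1) % n = p + 1 ∨ p + 1 = n ∧ (p + 1) % n = 0 := by
  rcases (Nat.succ_le_of_lt hp).lt_or_eq with h | h
  · exact .inl (Nat.mod_eq_of_lt h)
  · exact .inr ⟨h, h ▸ Nat.mod_self n⟩

lemma cycDist_add_one_mod_le (hp : p < n) (hq : q < n) :
    cycDist n ((p + 1) % n) q ≤ cycDist n p q + 1 ∧
      cycDist n p q ≤ cycDist n ((p + 1) % n) q + 1 := by
  have := add_one_mod_eq_or hp
  simp only [cycDist, Nat.dist]; omega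

lemma cycDist_zero_add_cycDist_antipode (hp : p < 2 * N) :
    cycDist (2 * N) 0 p + cycDist (2 * N) N p = N := by
  simp only [cycDist, Nat.dist]; omega

lemma cycDist_mod_two (hp : p < 2 * N) (hq : q < 2 * N) :
    cycDist (2 * N) p q % 2 = (p + q) % 2 := by
  simp only [cycDist, Nat.dist]; omega

lemma cycDist_zero_add_cycDist_two_mod_four (hp : p < 2 * N) :
    (cycDist (2 * (2 * N)) 0 (2 * p) + cycDist (2 * (2 * N)) 2 (2 * p)) % 4 = 2 := by
  simp only [cycDist, Nat.dist]; omega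

lemma cycDist_two_mul (hp : p < n) (hq : q < n) :
    cycDist (2 * n) (2 * p) (2 * q) = 2 * cycDist n p q := by
  simp only [cycDist, Nat.dist]; omega

lemma cycDist_two_mul_add_one (hp : p < n) (hq : q < n) :
    cycDist (2 * n) (2 * p) (2 * q + 1) =
      2 * min (cycDist n p q) (cycDist n p ((q + 1) % n)) + 1 := by
  have := add_one_mod_eq_or hq
  simp only [cycDist, Nat.dist]; omega

lemma eq_of_cycDist_zero_eq_of_cycDist_two_eq (hN : N ≠ 4) (hp : p < N) (hq : q < N)
    (h₀ : cycDist N 0 p = cycDist N 0 q) (h₂ : cycDist N 2 p = cycDist N 2 q) : p = q := by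
  simp only [cycDist, Nat.dist] at h₀ h₂; omega

end CycDist

lemma ZMod.val_add_one_eq {n : ℕ} [NeZero n] (x : ZMod n) : (x + 1).val = (x.val + 1) % n := by
  rw [← ZMod.val_natCast, Nat.cast_succ, ZMod.natCast_zmod_val]

lemma SimpleGraph.Walk.le_add_length {V : Type*} {G : SimpleGraph V} (f : V → ℕ)
    (hf : ∀ x y, G.Adj x y → f x ≤ f y + 1) {u v : V} (p : G.Walk u v) :
    f u ≤ f v + p.length := by
  induction p with
  | nil => simp
  | cons h _ ih => have := hf _ _ h; rw [Walk.length_cons]; omega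

lemma SimpleGraph.Reachable.le_add_dist {V : Type*} {G : SimpleGraph V} (f : V → ℕ)
    (hf : ∀ x y, G.Adj x y → f x ≤ f y + 1) {u v : V} (h : G.Reachable u v) :
    f u ≤ f v + G.dist u v := by
  obtain ⟨p, hp⟩ := h.exists_walk_length_eq_dist
  exact hp ▸ p.le_add_length f hf

lemma SimpleGraph.dist_boxProd {α β : Type*} {G : SimpleGraph α} {H : SimpleGraph β}
    {x y : α × β} (hG : G.Reachable x.1 y.1) (hH : H.Reachable x.2 y.2) :
    (G □ H).dist x y = G.dist x.1 y.1 + H.dist x.2 y.2 := by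
  simp only [SimpleGraph.dist, edist_boxProd]
  exact ENat.toNat_add (edist_ne_top_iff_reachable.2 hG) (edist_ne_top_iff_reachable.2 hH)

section CycleZ

variable {n : ℕ}

lemma cycleZ_adj {u v : ZMod n} : (cycleZ n).Adj u v ↔ u ≠ v ∧ (u = v + 1 ∨ v = u + 1) := by
  simp [cycleZ, sub_eq_iff_eq_add']

variable [Fact (1 < n)]

lemma cycleZ_adj_add_one (u : ZMod n) : (cycleZ n).Adj u (u + 1) :=
  cycleZ_adj.2 ⟨by simp, .inr rfl⟩

lemma cycleZ_exists_walk_add_natCast (u : ZMod n) (c : ℕ) :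
    ∃ p : (cycleZ n).Walk u (u + c), p.length = c := by
  induction c with
  | zero => exact ⟨Walk.nil.copy rfl (by simp), by simp⟩
  | succ c ih =>
    obtain ⟨p, hp⟩ := ih
    exact ⟨(p.concat (cycleZ_adj_add_one _)).copy rfl (by push_cast; ring), by simp [hp]⟩

lemma cycleZ_dist_add_natCast_le (u : ZMod n) (c : ℕ) : (cycleZ n).dist u (u + c) ≤ c := by
  obtain ⟨p, hp⟩ := cycleZ_exists_walk_add_natCast u c
  exact (dist_le p).trans hp.le

lemma cycleZ_connected : (cycleZ n).Connected := by
  refine ⟨fun u v => ?_⟩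
  obtain ⟨p, -⟩ := cycleZ_exists_walk_add_natCast u (v - u).val
  exact ⟨p.copy rfl (by simp)⟩

lemma cycleZ_dist (u v : ZMod n) : (cycleZ n).dist u v = cycDist n u.val v.val := by
  refine le_antisymm ?_ ?_
  · wlog h : u.val ≤ v.val generalizing u v with H
    · rw [dist_comm, cycDist_comm]; exact H v u (by omega)
    have hv : u + ((v.val - u.val : ℕ) : ZMod n) = v := by simp [Nat.cast_sub h]
    have hu : v + ((n - (v.val - u.val) : ℕ) : ZMod n) = u := by
      simp [Nat.cast_sub (v.val_lt.le.trans' (Nat.sub_le _ _)), Nat.cast_sub h]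
    have h₁ := hv ▸ cycleZ_dist_add_natCast_le u (v.val - u.val)
    have h₂ := hu ▸ cycleZ_dist_add_natCast_le v (n - (v.val - u.val))
    rw [dist_comm] at h₂
    simp only [cycDist, Nat.dist]; omega
  · have hstep : ∀ x y, (cycleZ n).Adj x y →
        cycDist n x.val v.val ≤ cycDist n y.val v.val + 1 := by
      rintro x y hxy
      rcases (cycleZ_adj.1 hxy).2 with rfl | rfl <;> rw [ZMod.val_add_one_eq]
      · exact (cycDist_add_one_mod_le y.val_lt v.val_lt).1
      · exact (cycDist_add_one_mod_le x.val_lt v.val_lt).2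
    simpa [cycDist, Nat.dist] using (cycleZ_connected.preconnected u v).le_add_dist _ hstep

end CycleZ

lemma torus_edge_cases {m n : ℕ} {e : Sym2 (ZMod m × ZMod n)} (he : e ∈ (torus m n).edgeSet) :
    (∃ x y, e = s((x, y), (x + 1, y))) ∨ ∃ x y, e = s((x, y), (x, y + 1)) := by
  induction e with
  | _ u v =>
    obtain ⟨u₁, u₂⟩ := u
    obtain ⟨v₁, v₂⟩ := v
    rcases boxProd_adj.1 he with ⟨ha, h⟩ | ⟨ha, h⟩ <;> dsimp only at ha h <;> subst h <;>
      rcases (cycleZ_adj.1 ha).2 with rfl | rfl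
    exacts [.inl ⟨_, _, Sym2.eq_swap⟩, .inl ⟨_, _, rfl⟩,
      .inr ⟨_, _, Sym2.eq_swap⟩, .inr ⟨_, _, rfl⟩]

def doubledDist (m n : ℕ) (w : ZMod m × ZMod n) (I J : ℕ) : ℕ :=
  cycDist (2 * m) (2 * w.1.val) I + cycDist (2 * n) (2 * w.2.val) J

/-- The edge of `T_{m,n}` whose midpoint is `(I, J)` in `T_{2m,2n}`. -/
def torusEdgeAt (m n I J : ℕ) : Sym2 (ZMod m × ZMod n) :=
  if I % 2 = 1 then s(((I / 2 : ℕ), (J / 2 : ℕ)), ((I / 2 : ℕ) + 1, (J / 2 : ℕ)))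
  else s(((I / 2 : ℕ), (J / 2 : ℕ)), ((I / 2 : ℕ), (J / 2 : ℕ) + 1))

section Torus

variable {m n : ℕ} [Fact (1 < m)] [Fact (1 < n)]

lemma torus_dist (w u : ZMod m × ZMod n) :
    (torus m n).dist w u = cycDist m w.1.val u.1.val + cycDist n w.2.val u.2.val := by
  rw [torus, dist_boxProd (cycleZ_connected.preconnected _ _) (cycleZ_connected.preconnected _ _),
    cycleZ_dist, cycleZ_dist]

lemma two_mul_torus_dist (w u : ZMod m × ZMod n) :
    2 * (torus m n).dist w u = doubledDist m n w (2 * u.1.val) (2 * u.2.val) := by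
  rw [torus_dist, doubledDist, cycDist_two_mul w.1.val_lt u.1.val_lt,
    cycDist_two_mul w.2.val_lt u.2.val_lt, mul_add]

lemma torus_exists_edge_midpoint {e : Sym2 (ZMod m × ZMod n)} (he : e ∈ (torus m n).edgeSet) :
    ∃ I < 2 * m, ∃ J < 2 * n, (I % 2 = 0 ∨ J % 2 = 0) ∧ e = torusEdgeAt m n I J ∧
      ∀ w, 2 * edist (torus m n) w e + 1 = doubledDist m n w I J := by
  rcases torus_edge_cases he with ⟨x, y, rfl⟩ | ⟨x, y, rfl⟩
  · refine ⟨2 * x.val + 1, by linarith [x.val_lt], 2 * y.val, by linarith [y.val_lt],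
      .inr (by omega), ?_, fun w => ?_⟩
    · have hI : (2 * x.val + 1) / 2 = x.val := by omega
      simp [torusEdgeAt, hI]
    · have := cycDist_two_mul_add_one w.1.val_lt x.val_lt
      have := cycDist_two_mul w.2.val_lt y.val_lt
      simp only [_root_.edist, Sym2.lift_mk, torus_dist, doubledDist, ZMod.val_add_one_eq]
      omega
  · refine ⟨2 * x.val, by linarith [x.val_lt], 2 * y.val + 1, by linarith [y.val_lt],
      .inl (by omega), ?_, fun w => ?_⟩
    · have hJ : (2 * y.val + 1) / 2 = y.val := by omega
      simp [torusEdgeAt, hJ]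
    · have := cycDist_two_mul w.1.val_lt x.val_lt
      have := cycDist_two_mul_add_one w.2.val_lt y.val_lt
      simp only [_root_.edist, Sym2.lift_mk, torus_dist, doubledDist, ZMod.val_add_one_eq]
      omega

end Torus

lemma mixedDim_le_ncard {V : Type*} {G : SimpleGraph V} {S : Set V} (h : MixedResolvingSet G S) :
    mixedDim G ≤ S.ncard :=
  Nat.sInf_le ⟨S, h, rfl⟩

def torusLandmarks (k l : ℕ) : Set (ZMod (2 * k) × ZMod (2 * l)) :=
  {((0 : ZMod (2 * k)), (0 : ZMod (2 * l))), (0, 1), (1, (l : ZMod (2 * l))),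
    ((k : ZMod (2 * k)), 0)}

section Landmarks

variable {k l : ℕ}

lemma ncard_torusLandmarks_le : (torusLandmarks k l).ncard ≤ 4 := by
  refine (Set.ncard_insert_le _ _).trans (Nat.succ_le_succ ?_)
  refine (Set.ncard_insert_le _ _).trans (Nat.succ_le_succ ?_)
  refine (Set.ncard_insert_le _ _).trans (Nat.succ_le_succ ?_)
  rw [Set.ncard_singleton]

lemma eq_of_doubledDist_torusLandmarks (hk : 2 ≤ k) (hl : 2 ≤ l) {I J I' J' : ℕ}
    (hI : I < 2 * (2 * k)) (hJ : J < 2 * (2 * l))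
    (hI' : I' < 2 * (2 * k)) (hJ' : J' < 2 * (2 * l))
    (h : ∀ w ∈ torusLandmarks k l,
      doubledDist (2 * k) (2 * l) w I J = doubledDist (2 * k) (2 * l) w I' J') :
    I = I' ∧ J = J' := by
  have : Fact (1 < 2 * k) := ⟨by omega⟩
  have : Fact (1 < 2 * l) := ⟨by omega⟩
  simp only [torusLandmarks, Set.mem_insert_iff, Set.mem_singleton_iff, forall_eq_or_imp,
    forall_eq, doubledDist, ZMod.val_zero, ZMod.val_one, mul_zero, mul_one,
    ZMod.val_natCast_of_lt (show k < 2 * k by omega),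
    ZMod.val_natCast_of_lt (show l < 2 * l by omega)] at h
  obtain ⟨h₁, h₂, h₃, h₄⟩ := h
  have := cycDist_zero_add_cycDist_antipode hI
  have := cycDist_zero_add_cycDist_antipode hI'
  have := cycDist_zero_add_cycDist_antipode hJ
  have := cycDist_zero_add_cycDist_antipode hJ'
  obtain rfl : J = J' :=
    eq_of_cycDist_zero_eq_of_cycDist_two_eq (by omega) hJ hJ' (by omega) (by omega)
  exact ⟨eq_of_cycDist_zero_eq_of_cycDist_two_eq (by omega) hI hI' (by omega) (by omega), rfl⟩

lemma not_forall_doubledDist_torusLandmarks_eq_add_one {i j I J : ℕ}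
    (hi : i < 2 * k) (hj : j < 2 * l) (hI : I < 2 * (2 * k)) (hJ : J < 2 * (2 * l))
    (hIJ : I % 2 = 0 ∨ J % 2 = 0) :
    ¬ ∀ w ∈ torusLandmarks k l,
      doubledDist (2 * k) (2 * l) w I J = doubledDist (2 * k) (2 * l) w (2 * i) (2 * j) + 1 := by
  have : Fact (1 < 2 * k) := ⟨by omega⟩
  have : Fact (1 < 2 * l) := ⟨by omega⟩
  intro h
  simp only [torusLandmarks, Set.mem_insert_iff, Set.mem_singleton_iff, forall_eq_or_imp,
    forall_eq, doubledDist, ZMod.val_zero, ZMod.val_one, mul_zero, mul_one,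
    ZMod.val_natCast_of_lt (show k < 2 * k by omega),
    ZMod.val_natCast_of_lt (show l < 2 * l by omega)] at h
  obtain ⟨h₁, -, h₃, h₄⟩ := h
  have := cycDist_zero_add_cycDist_antipode hI
  have := cycDist_zero_add_cycDist_antipode (show 2 * i < 2 * (2 * k) by omega)
  have := cycDist_zero_add_cycDist_antipode hJ
  have := cycDist_zero_add_cycDist_antipode (show 2 * j < 2 * (2 * l) by omega)
  have := cycDist_mod_two (show 0 < 2 * (2 * l) by omega) hJ
  have := cycDist_mod_two (show 0 < 2 * (2 * l) by omega) (show 2 * j < 2 * (2 * l) by omega)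
  -- `(0, 0)` and `(k, 0)` force `J` to be odd, so the edge is vertical and `I` is even;
  -- `(0, 0)` and `(1, l)` then contradict `cycDist_zero_add_cycDist_two_mod_four`
  obtain ⟨x, rfl⟩ : ∃ x, I = 2 * x := ⟨I / 2, by omega⟩
  have := cycDist_zero_add_cycDist_two_mod_four (show x < 2 * k by omega)
  have := cycDist_zero_add_cycDist_two_mod_four hi
  omega

theorem mixedResolvingSet_torusLandmarks (hk : 2 ≤ k) (hl : 2 ≤ l) :
    MixedResolvingSet (torus (2 * k) (2 * l)) (torusLandmarks k l) := by
  have : Fact (1 < 2 * k) := ⟨by omega⟩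
  have : Fact (1 < 2 * l) := ⟨by omega⟩
  refine ⟨fun u v huv => ?_, fun e he f hf hef => ?_, fun u e he => ?_⟩
  · by_contra! h
    obtain ⟨h₁, h₂⟩ := eq_of_doubledDist_torusLandmarks hk hl
      (I := 2 * u.1.val) (J := 2 * u.2.val) (I' := 2 * v.1.val) (J' := 2 * v.2.val)
      (by linarith [u.1.val_lt]) (by linarith [u.2.val_lt]) (by linarith [v.1.val_lt])
      (by linarith [v.2.val_lt])
      fun w hw => by rw [← two_mul_torus_dist, ← two_mul_torus_dist, h w hw]
    exact huv (Prod.ext (ZMod.val_injective _ (by omega)) (ZMod.val_injective _ (by omega)))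
  · by_contra! h
    obtain ⟨I, hI, J, hJ, -, rfl, hIJ⟩ := torus_exists_edge_midpoint he
    obtain ⟨I', hI', J', hJ', -, rfl, hIJ'⟩ := torus_exists_edge_midpoint hf
    obtain ⟨rfl, rfl⟩ := eq_of_doubledDist_torusLandmarks hk hl hI hJ hI' hJ'
      fun w hw => by rw [← hIJ, ← hIJ', h w hw]
    exact hef rfl
  · by_contra! h
    obtain ⟨I, hI, J, hJ, hodd, -, hIJ⟩ := torus_exists_edge_midpoint he
    exact not_forall_doubledDist_torusLandmarks_eq_add_one u.1.val_lt u.2.val_lt hI hJ hodd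
      fun w hw => by rw [← hIJ, ← two_mul_torus_dist, h w hw]

end Landmarks

theorem stmt_8 (k l : Nat) (hk : 2 ≤ k) (hl : 2 ≤ l) :
    MixedResolvingSet (torus (2 * k) (2 * l))
      {((0 : ZMod (2 * k)), (0 : ZMod (2 * l))), (0, 1), (1, (l : ZMod (2 * l))),
        ((k : ZMod (2 * k)), 0)} ∧
    mixedDim (torus (2 * k) (2 * l)) ≤ 4 :=
  ⟨mixedResolvingSet_torusLandmarks hk hl,
    (mixedDim_le_ncard (mixedResolvingSet_torusLandmarks hk hl)).trans ncard_torusLandmarks_le⟩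
end

section
/- If u and v are true twins in a connected simple graph G (i.e., N[u] = N[v]), then both u and v belong to every mixed resolving set of G. -/
open SimpleGraph

lemma twin_dist_le' {V : Type*} (G : SimpleGraph V) (hG : G.Connected) (u v w : V)
    (htw : ∀ x, G.Adj u x → x = v ∨ G.Adj v x) (hwu : w ≠ u) :
    G.dist w v ≤ G.dist w u := by
  obtain ⟨p, hp⟩ := hG.exists_walk_length_eq_dist u w
  cases p with
  | nil => exact absurd rfl hwu.symm
  | cons ha q =>
    rename_i x
    rw [SimpleGraph.Walk.length_cons, (SimpleGraph.dist_comm (G := G) (u := u) (v := w))] at hp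
    rw [(SimpleGraph.dist_comm (G := G) (u := w) (v := v))]
    rcases htw x ha with rfl | hvx
    · have := SimpleGraph.dist_le q
      omega
    · have := SimpleGraph.dist_le (SimpleGraph.Walk.cons hvx q)
      rw [SimpleGraph.Walk.length_cons] at this
      omega

theorem stmt_11 {V : Type*} (G : SimpleGraph V) (hG : G.Connected) (u v : V)
    (huv : u ≠ v) (h : insert u (G.neighborSet u) = insert v (G.neighborSet v)) :
    ∀ S : Set V, MixedResolvingSet G S → u ∈ S ∧ v ∈ S := by
  have htw_uv : ∀ x, G.Adj u x → x = v ∨ G.Adj v x := by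
    intro x hx
    have : x ∈ insert v (G.neighborSet v) := by
      rw [← h]; exact Set.mem_insert_of_mem _ hx
    rcases this with h1 | h2
    · exact Or.inl h1
    · exact Or.inr h2
  have htw_vu : ∀ x, G.Adj v x → x = u ∨ G.Adj u x := by
    intro x hx
    have : x ∈ insert u (G.neighborSet u) := by
      rw [h]; exact Set.mem_insert_of_mem _ hx
    rcases this with h1 | h2
    · exact Or.inl h1
    · exact Or.inr h2
  have hadj : G.Adj u v := by
    have : v ∈ insert u (G.neighborSet u) := by
      rw [h]; exact Set.mem_insert _ _
    rcases this with h1 | h2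
    · exact absurd h1.symm huv
    · exact h2
  have hdeq : ∀ w, w ≠ u → w ≠ v → G.dist w u = G.dist w v := fun w hwu hwv =>
    le_antisymm (twin_dist_le' G hG v u w htw_vu hwv) (twin_dist_le' G hG u v w htw_uv hwu)
  have hedge : s(u, v) ∈ G.edgeSet := hadj
  have hed : ∀ w, _root_.edist G w s(u, v) = min (G.dist w u) (G.dist w v) := fun w => rfl
  intro S hS
  constructor
  · obtain ⟨w, hwS, hw⟩ := hS.2.2 v s(u, v) hedge
    rw [hed] at hw
    by_cases hwu : w = u
    · exact hwu ▸ hwS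
    · by_cases hwv : w = v
      · subst hwv
        simp [SimpleGraph.dist_self] at hw
      · rw [hdeq w hwu hwv] at hw
        simp at hw
  · obtain ⟨w, hwS, hw⟩ := hS.2.2 u s(u, v) hedge
    rw [hed] at hw
    by_cases hwv : w = v
    · exact hwv ▸ hwS
    · by_cases hwu : w = u
      · subst hwu
        simp [SimpleGraph.dist_self] at hw
      · rw [hdeq w hwu hwv] at hw
        simp at hw
end

section
/- If u is a vertex of degree 1 in a connected simple graph G, then u belongs to every mixed resolving set of G. -/
open SimpleGraph

theorem stmt_14 {V : Type*} [Fintype V] (G : SimpleGraph V) [DecidableRel G.Adj]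
    (hG : G.Connected) (u : V) (h : G.degree u = 1) :
    ∀ S : Set V, MixedResolvingSet G S → u ∈ S := by
  intro S hS
  obtain ⟨v, hv⟩ := Finset.card_eq_one.mp h
  have hadj : G.Adj u v := by
    have : v ∈ G.neighborFinset u := by rw [hv]; simp
    simpa using this
  have he : s(u, v) ∈ G.edgeSet := hadj
  obtain ⟨w, hwS, hw⟩ := hS.2.2 v _ he
  have hwu : w = u := by
    by_contra hne
    apply hw
    -- show dist w v = edist G w s(u,v)
    have hle : G.dist w v ≤ G.dist w u := by
      obtain ⟨p, hp⟩ := (hG w u).exists_walk_length_eq_dist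
      obtain ⟨x, hux, q, hq⟩ := SimpleGraph.Walk.exists_eq_cons_of_ne
        (fun huw => hne huw.symm) p.reverse
      have hx : x = v := by
        have : x ∈ G.neighborFinset u := by simpa using hux
        rw [hv] at this
        simpa using this
      have hlen : G.dist w v ≤ q.reverse.length := by
        rw [← hx]; exact SimpleGraph.dist_le _
      have : p.reverse.length = q.length + 1 := by rw [hq]; simp
      simp only [SimpleGraph.Walk.length_reverse] at hlen this
      omega
    simp only [_root_.edist, Sym2.lift_mk]
    omega
  subst hwu
  exact hwS
end

section
/- Let G be a connected graph, S ⊆ V with x ∈ S, and let e₁,…,e_{deg(x)} be the edges incident to x. Then for every w ∈ S and each edge e incident to x, d(w,e) ∈ {d(w,x) − 1, d(w,x)}; consequently the number of distinct distance vectors (to S) among {x, e₁, …, e_{deg(x)}} is at most 2^{|S|−1}. -/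
open SimpleGraph

lemma edist_key {V : Type*} (G : SimpleGraph V) (hG : G.Connected) (w : V) {x : V}
    (e : Sym2 V) (he : e ∈ G.edgeSet) (hxe : x ∈ e) :
    edist G w e = G.dist w x - 1 ∨ edist G w e = G.dist w x := by
  obtain ⟨y, rfl⟩ := Sym2.mem_iff_exists.mp hxe
  have hadj : G.Adj x y := he
  have h1 : G.dist x y = 1 := dist_eq_one_iff_adj.mpr hadj
  have htri : G.dist w x ≤ G.dist w y + 1 := by
    calc G.dist w x ≤ G.dist w y + G.dist y x := hG.dist_triangle
    _ = G.dist w y + 1 := by rw [SimpleGraph.dist_comm.trans h1]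
  have : edist G w s(x, y) = min (G.dist w x) (G.dist w y) := rfl
  rw [this]
  rcases le_or_gt (G.dist w x) (G.dist w y) with h | h
  · right; exact min_eq_left h
  · left
    rw [min_eq_right h.le]
    omega

theorem stmt_17 {V : Type*} (G : SimpleGraph V) (hG : G.Connected)
    (S : Finset V) (x : V) (hx : x ∈ S) :
    (∀ w ∈ S, ∀ e ∈ G.edgeSet, x ∈ e →
      edist G w e = G.dist w x - 1 ∨ edist G w e = G.dist w x) ∧
    (insert (fun w : (S : Set V) => G.dist w x)
        ((fun (e : Sym2 V) (w : (S : Set V)) => _root_.edist G w e) ''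
          {e : Sym2 V | e ∈ G.edgeSet ∧ x ∈ e})).ncard
      ≤ 2 ^ (S.card - 1) := by
  refine ⟨fun w _ e he hxe => edist_key G hG w e he hxe, ?_⟩
  set T := (insert (fun w : (S : Set V) => G.dist w x)
        ((fun (e : Sym2 V) (w : (S : Set V)) => _root_.edist G w e) ''
          {e : Sym2 V | e ∈ G.edgeSet ∧ x ∈ e})) with hT
  -- every h in T takes values in {dist w x - 1, dist w x} and h x = 0
  have hprop : ∀ h ∈ T, (∀ w : (S : Set V),
      h w = G.dist w x - 1 ∨ h w = G.dist w x) ∧ h ⟨x, hx⟩ = 0 := by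
    rintro h (rfl | ⟨e, ⟨he, hxe⟩, rfl⟩)
    · exact ⟨fun w => Or.inr rfl, dist_self⟩
    · refine ⟨fun w => edist_key G hG w e he hxe, ?_⟩
      obtain ⟨y, rfl⟩ := Sym2.mem_iff_exists.mp hxe
      show min (G.dist x x) (G.dist x y) = 0
      simp
  -- injection into Boolean functions on S.erase x
  classical
  set F := fun (h : (_ : (S : Set V)) → ℕ) (w : {v : V // v ∈ S.erase x}) =>
    decide (h ⟨w.1, Finset.mem_of_mem_erase w.2⟩ = G.dist w.1 x) with hF
  have hinj : Set.InjOn F T := by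
    intro h1 h11 h2 h21 heq
    obtain ⟨p1, q1⟩ := hprop h1 h11
    obtain ⟨p2, q2⟩ := hprop h2 h21
    funext w
    by_cases hw : w.1 = x
    · have : w = ⟨x, hx⟩ := Subtype.ext hw
      rw [this, q1, q2]
    · have hw' : w.1 ∈ S.erase x := Finset.mem_erase.mpr ⟨hw, w.2⟩
      have := congrFun heq ⟨w.1, hw'⟩
      simp only [F, decide_eq_decide] at this
      have hpos : 0 < G.dist w.1 x :=
        hG.pos_dist_of_ne hw
      rcases p1 w with a1 | a1 <;> rcases p2 w with a2 | a2 <;>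
        rw [a1, a2] at this ⊢ <;> omega
  calc T.ncard ≤ (Set.univ : Set ({v : V // v ∈ S.erase x} → Bool)).ncard :=
        Set.ncard_le_ncard_of_injOn F (fun _ _ => Set.mem_univ _) hinj Set.finite_univ
    _ = 2 ^ (S.card - 1) := by
        rw [Set.ncard_univ, Nat.card_eq_fintype_card, Fintype.card_fun,
          Fintype.card_coe, Finset.card_erase_of_mem hx]
        rfl
end
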